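/- arXiv:1804.05199 — 2 statements merged into one kernel-verified Lean document; each statement's English description precedes it below -/
import Mathlib

section
/- Let X be a uniform space with uniformity 𝒰_X. For sequences V = (V_n)_{n≥1} of entourages V_n ∈ 𝒰_X and φ = (φ_n)_{n≥1} of functions φ_n : X → ℝ_{>0}, define W(V, φ) ⊆ 𝕍_X := X →₀ ℝ as the union over m ≥ 1 of all sums ∑_{n=1}^m t_n (δ(x_n) − δ(y_n)) + ∑_{n=1}^m s_n δ(u_n), where for each n ≤ m: |t_n| ≤ 1, (x_n, y_n) ∈ V_n, u_n ∈ X and |s_n| ≤ 1/φ_n(u_n). Then for every such pair (V, φ) there exist a sequence V' = (V'_n)_{n≥1} of entourages V'_n ∈ 𝒰_X and a sequence φ' = (φ'_n)_{n≥1} of functions φ'_n : X → ℝ_{>0} such that W(V', φ') + W(V', φ') ⊆ W(V, φ). In fact one may take V'_n := V_{2n−1} ∩ V_{2n} and φ'_n := max(φ_{2n−1}, φ_{2n}). -/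
open Finset Pointwise

/-- The canonical embedding `δ : X → (X →₀ ℝ)`, `δ x = δ_x`. -/
noncomputable def freeDelta {X : Type*} (x : X) : X →₀ ℝ := Finsupp.single x 1

/-- The set `W(V, φ) ⊆ 𝕍_X = X →₀ ℝ`: the union over `m ≥ 1` of all sums
`∑_{n=1}^m t_n (δ(x_n) − δ(y_n)) + ∑_{n=1}^m s_n δ(u_n)` where for each `1 ≤ n ≤ m`
we have `|t_n| ≤ 1`, `(x_n, y_n) ∈ V_n`, `u_n ∈ X` and `|s_n| ≤ 1 / φ_n (u_n)`. -/
noncomputable def freeW {X : Type*} (V : ℕ → Set (X × X)) (φ : ℕ → X → ℝ) :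
    Set (X →₀ ℝ) :=
  {w : X →₀ ℝ | ∃ m : ℕ, 1 ≤ m ∧ ∃ (t s : ℕ → ℝ) (x y u : ℕ → X),
    (∀ n ∈ Finset.Icc 1 m, |t n| ≤ 1 ∧ (x n, y n) ∈ V n ∧ |s n| ≤ 1 / φ n (u n)) ∧
    w = ∑ n ∈ Finset.Icc 1 m,
      (t n • (freeDelta (x n) - freeDelta (y n)) + s n • freeDelta (u n))}

lemma sum_double {M : Type*} [AddCommMonoid M] (f : ℕ → M) (m : ℕ) :
    ∑ n ∈ Finset.Icc 1 (2*m), f n = ∑ k ∈ Finset.Icc 1 m, (f (2*k-1) + f (2*k)) := by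
  induction m with
  | zero => simp
  | succ m ih =>
    rw [show 2*(m+1) = (2*m+1)+1 by ring, Finset.sum_Icc_succ_top (by omega),
      show 2*m+1 = (2*m)+1 by ring, Finset.sum_Icc_succ_top (by omega), ih,
      Finset.sum_Icc_succ_top (by omega)]
    have h1 : 2*(m+1)-1 = 2*m+1 := by omega
    have h2 : 2*(m+1) = 2*m+1+1 := by ring
    rw [h1, h2]
    abel

/-- if `X` is a uniform space, `V_n ∈ 𝒰_X` are entourages and
`φ_n : X → ℝ_{>0}`, then there exist entourages `V'_n ∈ 𝒰_X` and functions
`φ'_n : X → ℝ_{>0}` with `W(V', φ') + W(V', φ') ⊆ W(V, φ)`. -/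
theorem stmt4 {X : Type*} [UniformSpace X]
    (V : ℕ → Set (X × X)) (hV : ∀ n, V n ∈ uniformity X)
    (φ : ℕ → X → ℝ) (hφ : ∀ n x, 0 < φ n x) :
    ∃ (V' : ℕ → Set (X × X)) (φ' : ℕ → X → ℝ),
      (∀ n, V' n ∈ uniformity X) ∧ (∀ n x, 0 < φ' n x) ∧
      freeW V' φ' + freeW V' φ' ⊆ freeW V φ := by

  classical
  refine ⟨fun n => V (2*n-1) ∩ V (2*n), fun n x => max (φ (2*n-1) x) (φ (2*n) x),
    fun n => Filter.inter_mem (hV _) (hV _), fun n x => lt_max_of_lt_left (hφ _ x), ?_⟩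
  rintro w ⟨w₁, hw₁, w₂, hw₂, rfl⟩
  obtain ⟨m₁, hm₁, t₁, s₁, x₁, y₁, u₁, h₁, rfl⟩ := hw₁
  obtain ⟨m₂, hm₂, t₂, s₂, x₂, y₂, u₂, h₂, rfl⟩ := hw₂
  set x₀ := u₁ 1 with hx₀
  set M := max m₁ m₂ with hM
  set T : ℕ → ℝ := fun n => if Even n then (if n/2 ≤ m₂ then t₂ (n/2) else 0)
      else (if (n+1)/2 ≤ m₁ then t₁ ((n+1)/2) else 0) with hT
  set S : ℕ → ℝ := fun n => if Even n then (if n/2 ≤ m₂ then s₂ (n/2) else 0)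
      else (if (n+1)/2 ≤ m₁ then s₁ ((n+1)/2) else 0) with hS
  set Xf : ℕ → X := fun n => if Even n then (if n/2 ≤ m₂ then x₂ (n/2) else x₀)
      else (if (n+1)/2 ≤ m₁ then x₁ ((n+1)/2) else x₀) with hXf
  set Yf : ℕ → X := fun n => if Even n then (if n/2 ≤ m₂ then y₂ (n/2) else x₀)
      else (if (n+1)/2 ≤ m₁ then y₁ ((n+1)/2) else x₀) with hYf
  set Uf : ℕ → X := fun n => if Even n then (if n/2 ≤ m₂ then u₂ (n/2) else x₀)
      else (if (n+1)/2 ≤ m₁ then u₁ ((n+1)/2) else x₀) with hUf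
  refine ⟨2*M, by omega, T, S, Xf, Yf, Uf, ?_, ?_⟩
  · intro n hn
    rw [Finset.mem_Icc] at hn
    by_cases he : Even n
    · obtain ⟨k, rfl⟩ := he
      have he' : Even (k + k) := ⟨k, rfl⟩
      simp only [hT, hS, hXf, hYf, hUf, if_pos he']
      rw [show (k + k)/2 = k by omega]
      by_cases hkm : k ≤ m₂
      · obtain ⟨ha, hb, hc⟩ := h₂ k (Finset.mem_Icc.mpr ⟨by omega, hkm⟩)
        rw [if_pos hkm, if_pos hkm, if_pos hkm, if_pos hkm, if_pos hkm,
          show k + k = 2*k by ring]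
        exact ⟨ha, hb.2,
          hc.trans (one_div_le_one_div_of_le (hφ _ _) (le_max_right _ _))⟩
      · rw [if_neg hkm, if_neg hkm, if_neg hkm, if_neg hkm, if_neg hkm]
        exact ⟨by simp, refl_mem_uniformity (hV _),
          by rw [abs_zero]; exact one_div_nonneg.mpr (hφ _ _).le⟩
    · obtain ⟨k0, rfl⟩ := Nat.not_even_iff_odd.mp he
      have he' : ¬ Even (2*k0 + 1) := by rw [Nat.even_iff]; omega
      simp only [hT, hS, hXf, hYf, hUf, if_neg he']
      rw [show (2*k0 + 1 + 1)/2 = k0 + 1 by omega]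
      by_cases hkm : k0 + 1 ≤ m₁
      · obtain ⟨ha, hb, hc⟩ := h₁ (k0+1) (Finset.mem_Icc.mpr ⟨by omega, hkm⟩)
        rw [if_pos hkm, if_pos hkm, if_pos hkm, if_pos hkm, if_pos hkm,
          show 2*k0 + 1 = 2*(k0+1) - 1 by omega]
        exact ⟨ha, hb.1,
          hc.trans (one_div_le_one_div_of_le (hφ _ _) (le_max_left _ _))⟩
      · rw [if_neg hkm, if_neg hkm, if_neg hkm, if_neg hkm, if_neg hkm]
        exact ⟨by simp, refl_mem_uniformity (hV _),
          by rw [abs_zero]; exact one_div_nonneg.mpr (hφ _ _).le⟩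
  · rw [sum_double]
    have key : ∀ k ∈ Finset.Icc 1 M,
        (T (2*k-1) • (freeDelta (Xf (2*k-1)) - freeDelta (Yf (2*k-1))) + S (2*k-1) • freeDelta (Uf (2*k-1)))
        + (T (2*k) • (freeDelta (Xf (2*k)) - freeDelta (Yf (2*k))) + S (2*k) • freeDelta (Uf (2*k)))
        = (if k ≤ m₁ then t₁ k • (freeDelta (x₁ k) - freeDelta (y₁ k)) + s₁ k • freeDelta (u₁ k) else 0)
        + (if k ≤ m₂ then t₂ k • (freeDelta (x₂ k) - freeDelta (y₂ k)) + s₂ k • freeDelta (u₂ k) else 0) := by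
      intro k hk
      rw [Finset.mem_Icc] at hk
      have ho : ¬ Even (2*k-1) := by rw [Nat.even_iff]; omega
      have he : Even (2*k) := ⟨k, by ring⟩
      have hd1 : (2*k-1+1)/2 = k := by omega
      have hd2 : (2*k)/2 = k := by omega
      simp only [hT, hS, hXf, hYf, hUf, if_neg ho, if_pos he, hd1, hd2]
      by_cases hk1 : k ≤ m₁ <;> by_cases hk2 : k ≤ m₂ <;>
        simp [hk1, hk2]
    rw [Finset.sum_congr rfl key]
    have ext : ∀ (m : ℕ), m ≤ M → ∀ (f : ℕ → (X →₀ ℝ)),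
        ∑ k ∈ Finset.Icc 1 m, f k = ∑ k ∈ Finset.Icc 1 M, (if k ≤ m then f k else 0) := by
      intro m hm f
      rw [← Finset.sum_subset (Finset.Icc_subset_Icc_right hm)]
      · exact Finset.sum_congr rfl fun k hk => by
          rw [Finset.mem_Icc] at hk; simp [hk.2]
      · intro k hkM hk
        rw [Finset.mem_Icc] at hkM
        simp only [Finset.mem_Icc, not_and, not_le] at hk
        have hk' := hk hkM.1
        simp [show ¬ k ≤ m by omega]
    rw [ext m₁ (le_max_left _ _) (fun k => t₁ k • (freeDelta (x₁ k) - freeDelta (y₁ k)) + s₁ k • freeDelta (u₁ k)),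
      ext m₂ (le_max_right _ _) (fun k => t₂ k • (freeDelta (x₂ k) - freeDelta (y₂ k)) + s₂ k • freeDelta (u₂ k))]
    exact Finset.sum_add_distrib.symm
end

section
/- Let X be a uniform space with uniformity 𝒰_X, and let 𝕍_X := X →₀ ℝ carry a topology 𝒯 that makes 𝕍_X a topological additive group and for which the family ℬ = { W(V, φ) : V ∈ 𝒰_X^ℕ, φ ∈ (ℝ_{>0}^X)^ℕ } of sets defined below is a base of neighbourhoods of zero. Then the canonical map δ : X → (𝕍_X, 𝒯), δ(x) := δ_x, is continuous, where X carries the topology induced by its uniformity. (Indeed, for every x ∈ X and every W = W(V, φ) ∈ ℬ, the neighbourhood δ(x) + W(V, φ) contains δ(V_1[x]), where V_1[x] := { y ∈ X : (x, y) ∈ V_1 }.) -/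
open Finset

/-- A one-term sum with `t₁ = -1`, `(x₁, y₁) = (x, y)` and `s₁ = 0`. -/
theorem freeDelta_sub_freeDelta_mem_freeW {X : Type*} {V : ℕ → Set (X × X)}
    {φ : ℕ → X → ℝ} {x y : X} (hxy : (x, y) ∈ V 1) (hφ : 0 ≤ φ 1 x) :
    freeDelta y - freeDelta x ∈ freeW V φ := by
  refine ⟨1, le_rfl, fun _ => -1, fun _ => 0, fun _ => x, fun _ => y, fun _ => x, ?_, ?_⟩
  · intro n hn
    obtain rfl : n = 1 := by simpa using hn
    exact ⟨by simp, hxy, by simpa using hφ⟩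
  · simp

/-- if `X` is a uniform space and `𝒯` is a topology on `𝕍_X = X →₀ ℝ` making it
a topological additive group for which the family `{ W(V, φ) }` is a base of neighbourhoods
of zero, then the canonical map `δ : X → (𝕍_X, 𝒯)` is continuous (where `X` carries the
topology induced by its uniformity). -/
theorem stmt6 {X : Type*} [UniformSpace X] (T : TopologicalSpace (X →₀ ℝ))
    (hgrp : @IsTopologicalAddGroup (X →₀ ℝ) T _)
    (hbasis : (@nhds (X →₀ ℝ) T 0).HasBasis
      (fun p : (ℕ → Set (X × X)) × (ℕ → X → ℝ) =>
        (∀ n, p.1 n ∈ uniformity X) ∧ ∀ n x, 0 < p.2 n x)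
      (fun p => freeW p.1 p.2)) :
    @Continuous X (X →₀ ℝ) _ T (fun x => freeDelta x) := by
  let _ : TopologicalSpace (X →₀ ℝ) := T
  refine continuous_iff_continuousAt.2 fun x => ?_
  rw [ContinuousAt, ← tendsto_sub_nhds_zero_iff, hbasis.tendsto_right_iff]
  rintro ⟨V, φ⟩ ⟨hV, hφ⟩
  filter_upwards [UniformSpace.ball_mem_nhds x (hV 1)] with y hy
  exact freeDelta_sub_freeDelta_mem_freeW hy (hφ 1 x).le
end
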